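/- Let p_1, ..., p_r be homogeneous prime ideals in a positively graded ring R and let x_1, ..., x_r be homogeneous elements such that x_j ∈ p_j but x_j ∉ p_i for all i ≠ j (with r ≥ 2). Set α = deg x_1 and β = deg(x_2 ⋯ x_r). Then the element x = x_1^{lcm(α,β)/α} + (x_2 ⋯ x_r)^{lcm(α,β)/β} is homogeneous of degree lcm(α, β) and x ∉ p_1 ∪ ... ∪ p_r. -/

import Mathlib

/-!
The first summand lies in `p₁` while the second does not (no factor `x_j`, `j ≥ 2`, lies in
`p₁`); for `i ≥ 2` the roles swap, since `x_i` divides the second summand but `x₁ ∉ pᵢ`.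
A sum of an element of a prime and an element outside it lies outside it. The exponents
`lcm(α,β)/α` and `lcm(α,β)/β` are chosen so that both summands have degree `lcm(α,β)`.
-/

open Finset

theorem SetLike.pow_div_mem_graded {R S : Type*} [Monoid R] [SetLike S R] (𝒜 : ℕ → S)
    [SetLike.GradedMonoid 𝒜] {a : R} {m n : ℕ} (hnm : n ∣ m) (ha : a ∈ 𝒜 n) :
    a ^ (m / n) ∈ 𝒜 m := by
  simpa only [smul_eq_mul, Nat.div_mul_cancel hnm] using SetLike.pow_mem_graded (m / n) ha

theorem Nat.lcm_div_left_pos {a b : ℕ} (ha : 0 < a) (hb : 0 < b) : 0 < Nat.lcm a b / a :=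
  Nat.div_pos (Nat.le_of_dvd (Nat.lcm_pos ha hb) (Nat.dvd_lcm_left a b)) ha

theorem Nat.lcm_div_right_pos {a b : ℕ} (ha : 0 < a) (hb : 0 < b) : 0 < Nat.lcm a b / b := by
  simpa only [Nat.lcm_comm] using Nat.lcm_div_left_pos hb ha

theorem Ideal.IsPrime.pow_add_pow_notMem {R : Type*} [CommRing R] {P : Ideal R}
    (hP : P.IsPrime) {a b : R} (ha : a ∈ P) (hb : b ∉ P) {m : ℕ} (hm : 0 < m) (n : ℕ) :
    a ^ m + b ^ n ∉ P := by
  rw [P.add_mem_iff_right (P.pow_mem_of_mem ha m hm)]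
  exact fun hbn => hb (hP.mem_of_pow_mem n hbn)

theorem stmt5_general (K : Type*) [Field K] (R : Type*) [CommRing R] [Algebra K R]
    (𝒜 : ℕ → Submodule K R) [GradedAlgebra 𝒜]
    (r : ℕ) (hr : 2 ≤ r) (p : Fin r → Ideal R)
    (hprime : ∀ i, (p i).IsPrime)
    (hr0 : 0 < r) (x : Fin r → R) (d : Fin r → ℕ)
    (hdpos : ∀ j, 0 < d j)
    (hx : ∀ j, x j ∈ 𝒜 (d j))
    (hin : ∀ j, x j ∈ p j)
    (hout : ∀ i j, i ≠ j → x j ∉ p i)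
    (α β : ℕ)
    (hα : α = d ⟨0, hr0⟩)
    (hβ : β = ∑ j ∈ univ.erase ⟨0, hr0⟩, d j) :
    (x ⟨0, hr0⟩) ^ (Nat.lcm α β / α) + (∏ j ∈ univ.erase ⟨0, hr0⟩, x j) ^ (Nat.lcm α β / β)
        ∈ 𝒜 (Nat.lcm α β) ∧
    ∀ i, (x ⟨0, hr0⟩) ^ (Nat.lcm α β / α) + (∏ j ∈ univ.erase ⟨0, hr0⟩, x j) ^ (Nat.lcm α β / β)
        ∉ p i := by
  set i₀ : Fin r := ⟨0, hr0⟩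
  have hα₀ : 0 < α := hα ▸ hdpos i₀
  have hβ₀ : 0 < β :=
    hβ ▸ sum_pos (fun j _ => hdpos j) ⟨⟨1, hr⟩, by simp [i₀, Fin.ext_iff]⟩
  have hprod : ∏ j ∈ univ.erase i₀, x j ∈ 𝒜 β :=
    hβ ▸ SetLike.prod_mem_graded 𝒜 d x fun j _ => hx j
  refine ⟨add_mem (SetLike.pow_div_mem_graded 𝒜 (Nat.dvd_lcm_left α β) (hα ▸ hx i₀))
    (SetLike.pow_div_mem_graded 𝒜 (Nat.dvd_lcm_right α β) hprod), fun i => ?_⟩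
  have := hprime i
  obtain rfl | hi := eq_or_ne i i₀
  · have hprod_notMem : ∏ j ∈ univ.erase i₀, x j ∉ p i₀ := by
      rw [Ideal.IsPrime.prod_mem_iff]
      rintro ⟨j, hj, hxj⟩
      exact hout i₀ j (ne_of_mem_erase hj).symm hxj
    exact (hprime i₀).pow_add_pow_notMem (hin i₀) hprod_notMem (Nat.lcm_div_left_pos hα₀ hβ₀) _
  · have hprod_mem : ∏ j ∈ univ.erase i₀, x j ∈ p i :=
      Ideal.IsPrime.prod_mem_iff.2 ⟨i, mem_erase.2 ⟨hi, mem_univ i⟩, hin i⟩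
    rw [add_comm]
    exact (hprime i).pow_add_pow_notMem hprod_mem (hout i i₀ hi)
      (Nat.lcm_div_right_pos hα₀ hβ₀) _

open Finset in
/-- Let `p₁,…,p_r` be homogeneous prime ideals in a positively graded ring
and `x₁,…,x_r` homogeneous elements of positive degrees with `x_j ∈ p_j`, `x_j ∉ p_i`
for `i ≠ j`. With `α = deg x₁`, `β = deg (x₂⋯x_r)`, the element
`x = x₁^(lcm(α,β)/α) + (x₂⋯x_r)^(lcm(α,β)/β)` is homogeneous of degree `lcm(α,β)`
and lies outside every `pᵢ`. -/
theorem stmt5 (K : Type*) [Field K] (R : Type*) [CommRing R] [Algebra K R]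
    (𝒜 : ℕ → Submodule K R) [GradedAlgebra 𝒜]
    (r : ℕ) (hr : 2 ≤ r) (p : Fin r → Ideal R)
    (hprime : ∀ i, (p i).IsPrime)
    (hhom : ∀ i, Ideal.IsHomogeneous 𝒜 (p i))
    (hr0 : 0 < r) (x : Fin r → R) (d : Fin r → ℕ)
    (hdpos : ∀ j, 0 < d j)
    (hx : ∀ j, x j ∈ 𝒜 (d j))
    (hin : ∀ j, x j ∈ p j)
    (hout : ∀ i j, i ≠ j → x j ∉ p i)
    (α β : ℕ)
    (hα : α = d ⟨0, hr0⟩)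
    (hβ : β = ∑ j ∈ univ.erase ⟨0, hr0⟩, d j) :
    (x ⟨0, hr0⟩) ^ (Nat.lcm α β / α) + (∏ j ∈ univ.erase ⟨0, hr0⟩, x j) ^ (Nat.lcm α β / β)
        ∈ 𝒜 (Nat.lcm α β) ∧
    ∀ i, (x ⟨0, hr0⟩) ^ (Nat.lcm α β / α) + (∏ j ∈ univ.erase ⟨0, hr0⟩, x j) ^ (Nat.lcm α β / β)
        ∉ p i :=
  stmt5_general K R 𝒜 r hr p hprime hr0 x d hdpos hx hin hout α β hα hβ
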